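/- Let s ∈ (1, 3/2), h > 0, and let N ≥ 2 be an integer. Let S be the (N−1)×(N−1) matrix with entries S_{kj} = A_s h^{1−2s} t_{|k−j|}(s). Then S_{kk} > 0 for all k; S_{kj} < 0 when |k−j| = 1; S_{kj} > 0 when |k−j| ≥ 2; the first and last rows are strictly diagonally dominant, i.e. S_{11} > Σ_{j≠1} |S_{1j}| and S_{N−1,N−1} > Σ_{j≠N−1} |S_{N−1,j}|; and if N ≥ 4 then for every 2 ≤ k ≤ N−2 the reverse strict inequality holds: S_{kk} < Σ_{j≠k} |S_{kj}|. -/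

import Mathlib

/-- `t_p(s)`, with the convention `0^(3-2s) = 0` (automatic for `rpow`). -/
noncomputable def tFn (s : ℝ) (p : ℕ) : ℝ :=
  |(p : ℝ) - 2| ^ (3 - 2 * s) - 4 * |(p : ℝ) - 1| ^ (3 - 2 * s) + 6 * (p : ℝ) ^ (3 - 2 * s)
    - 4 * ((p : ℝ) + 1) ^ (3 - 2 * s) + ((p : ℝ) + 2) ^ (3 - 2 * s)

/-- `A_s = 1/(2 Γ(4-2s) cos(sπ))`. -/
noncomputable def Acoef (s : ℝ) : ℝ := 1 / (2 * Real.Gamma (4 - 2 * s) * Real.cos (s * Real.pi))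

/-!
Write `a = 3 - 2s ∈ (0, 1)` and `φ x = (x + 1)^a - 2 x^a + (x - 1)^a`. For `p ≥ 2`, `t_p` is the
second difference of `φ` at `p`. Since `φ' = a Δ²(x^(a-1))` and `x^(a-1)`, `x^(a-2)` are strictly
convex, `φ` is strictly increasing and strictly concave on `[1, ∞)`, so `t_p < 0` for `p ≥ 2`, while
`t_0 = 2·2^a - 8 < 0`, `t_1 = 7 - 4·2^a + 3^a > 0` and `A_s < 0` fix the signs of the entries.
In an edge row the off-diagonal sum telescopes to `t_1 + (φ 2 - φ 1) - (φ (m + 1) - φ m)`, which is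
below `-t_0` because `φ` increases and `3^a ≤ 2·2^a - 1` (concavity of `x^a`). An interior row has
two neighbours, and `2 t_1 > -t_0` is the inequality `3·2^a < 3 + 3^a`.
-/

open Real Set

noncomputable def secondDiff (f : ℝ → ℝ) (x : ℝ) : ℝ := f (x + 1) - 2 * f x + f (x - 1)

lemma StrictConvexOn.secondDiff_pos {D : Set ℝ} {f : ℝ → ℝ} (hf : StrictConvexOn ℝ D f) {x : ℝ}
    (hm : x - 1 ∈ D) (hp : x + 1 ∈ D) : 0 < secondDiff f x := by
  have h := hf.2 hm hp (by linarith) (by norm_num : (0 : ℝ) < 1 / 2)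
    (by norm_num : (0 : ℝ) < 1 / 2) (by norm_num)
  simp only [smul_eq_mul] at h
  rw [show 1 / 2 * (x - 1) + 1 / 2 * (x + 1) = x by ring] at h
  unfold secondDiff
  linarith

lemma StrictConcaveOn.secondDiff_neg {D : Set ℝ} {f : ℝ → ℝ} (hf : StrictConcaveOn ℝ D f)
    {x : ℝ} (hm : x - 1 ∈ D) (hp : x + 1 ∈ D) : secondDiff f x < 0 := by
  have h := hf.neg.secondDiff_pos hm hp
  simp only [secondDiff, Pi.neg_apply] at h ⊢
  linarith

lemma HasDerivAt.secondDiff {f f' : ℝ → ℝ} {x : ℝ} (hm : HasDerivAt f (f' (x - 1)) (x - 1))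
    (h : HasDerivAt f (f' x) x) (hp : HasDerivAt f (f' (x + 1)) (x + 1)) :
    HasDerivAt (secondDiff f) (secondDiff f' x) x := by
  have hp' := hp.comp_add_const x 1
  have hm' := hm.comp_sub_const x 1
  exact (hp'.sub (h.const_mul 2)).add hm'

lemma strictConvexOn_rpow_of_neg {c : ℝ} (hc : c < 0) :
    StrictConvexOn ℝ (Ioi 0) fun x : ℝ ↦ x ^ c := by
  refine StrictMonoOn.strictConvexOn_of_deriv (convex_Ioi 0)
    (fun x hx ↦ (continuousAt_rpow_const x c (Or.inl (ne_of_gt hx))).continuousWithinAt) ?_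
  rw [interior_Ioi, deriv_rpow_const']
  exact fun x hx y _ hxy ↦ mul_lt_mul_of_neg_left (rpow_lt_rpow_of_neg hx hxy (by linarith)) hc

lemma hasDerivAt_secondDiff_rpow (c : ℝ) {x : ℝ} (hx : 1 < x) :
    HasDerivAt (secondDiff (· ^ c)) (c * secondDiff (· ^ (c - 1)) x) x := by
  have hd : ∀ y : ℝ, 0 < y → HasDerivAt (· ^ c) (c * y ^ (c - 1)) y :=
    fun y hy ↦ hasDerivAt_rpow_const (Or.inl hy.ne')
  convert HasDerivAt.secondDiff (f' := fun y ↦ c * y ^ (c - 1)) (hd _ (by linarith))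
    (hd _ (by linarith)) (hd _ (by linarith)) using 1
  simp only [secondDiff]
  ring

lemma secondDiff_rpow_pos_of_neg {c x : ℝ} (hc : c < 0) (hx : 1 < x) :
    0 < secondDiff (· ^ c) x :=
  (strictConvexOn_rpow_of_neg hc).secondDiff_pos (by rw [mem_Ioi]; linarith)
    (by rw [mem_Ioi]; linarith)

lemma strictAntiOn_secondDiff_rpow {c : ℝ} (hc : c < 0) :
    StrictAntiOn (secondDiff (· ^ c)) (Ioi 1) := by
  refine strictAntiOn_of_hasDerivWithinAt_neg (convex_Ioi 1)
    (fun x hx ↦ (hasDerivAt_secondDiff_rpow c hx).continuousAt.continuousWithinAt)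
    (fun x hx ↦ (hasDerivAt_secondDiff_rpow c (interior_subset hx)).hasDerivWithinAt) ?_
  rw [interior_Ioi]
  exact fun x hx ↦ mul_neg_of_neg_of_pos hc (secondDiff_rpow_pos_of_neg (by linarith) hx)

lemma continuous_secondDiff_rpow {a : ℝ} (ha : 0 < a) : Continuous (secondDiff (· ^ a)) := by
  have h := continuous_rpow_const ha.le
  exact ((h.comp (continuous_add_const 1)).sub (continuous_const.mul h)).add
    (h.comp (continuous_sub_right 1))

lemma strictMonoOn_secondDiff_rpow {a : ℝ} (ha₀ : 0 < a) (ha₁ : a < 1) :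
    StrictMonoOn (secondDiff (· ^ a)) (Ici 1) := by
  refine strictMonoOn_of_hasDerivWithinAt_pos (convex_Ici 1)
    (continuous_secondDiff_rpow ha₀).continuousOn
    (fun x hx ↦ (hasDerivAt_secondDiff_rpow a (by simpa using hx)).hasDerivWithinAt) ?_
  rw [interior_Ici]
  exact fun x hx ↦ mul_pos ha₀ (secondDiff_rpow_pos_of_neg (by linarith) hx)

lemma strictConcaveOn_secondDiff_rpow {a : ℝ} (ha₀ : 0 < a) (ha₁ : a < 1) :
    StrictConcaveOn ℝ (Ici 1) (secondDiff (· ^ a)) := by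
  refine StrictAntiOn.strictConcaveOn_of_deriv (convex_Ici 1)
    (continuous_secondDiff_rpow ha₀).continuousOn ?_
  rw [interior_Ici]
  intro x hx y hy hxy
  rw [(hasDerivAt_secondDiff_rpow a hx).deriv, (hasDerivAt_secondDiff_rpow a hy).deriv]
  exact mul_lt_mul_of_pos_left (strictAntiOn_secondDiff_rpow (by linarith) hx hy hxy) ha₀

lemma three_rpow_le_two_mul_two_rpow_sub_one {a : ℝ} (ha₀ : 0 ≤ a) (ha₁ : a ≤ 1) :
    (3 : ℝ) ^ a ≤ 2 * 2 ^ a - 1 := by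
  have h := (concaveOn_rpow ha₀ ha₁).2 (mem_Ici.2 zero_le_one)
    (mem_Ici.2 (by norm_num : (0 : ℝ) ≤ 3))
    (by norm_num : (0 : ℝ) ≤ 1 / 2) (by norm_num : (0 : ℝ) ≤ 1 / 2) (by norm_num)
  norm_num at h
  linarith

lemma three_mul_two_rpow_lt_three_add_three_rpow {a : ℝ} (ha : a < 1) :
    3 * (2 : ℝ) ^ a < 3 + 3 ^ a := by
  -- `3·4^a < 4·3^a`, and then `3 + 3^a > 3 + 3·4^a/4 ≥ 3·2^a` by AM-GM
  have h43 : (4 : ℝ) ^ (a - 1) < 3 ^ (a - 1) :=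
    rpow_lt_rpow_of_neg (by norm_num) (by norm_num) (by linarith)
  have hsq : ((2 : ℝ) ^ a) ^ 2 = 4 ^ a := by
    rw [← rpow_two, ← rpow_mul zero_le_two, mul_comm, rpow_mul zero_le_two]
    norm_num
  rw [rpow_sub (by norm_num), rpow_sub (by norm_num), rpow_one, rpow_one, ← hsq] at h43
  have h2 : 0 < (2 : ℝ) ^ a := by positivity
  have h3 : 0 < (3 : ℝ) ^ a := by positivity
  nlinarith [sq_nonneg ((2 : ℝ) ^ a - 2)]

lemma Acoef_neg {s : ℝ} (hs : s ∈ Ioo (1 / 2) (3 / 2)) : Acoef s < 0 := by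
  obtain ⟨hs₁, hs₂⟩ := hs
  have hcos : cos (s * π) < 0 :=
    cos_neg_of_pi_div_two_lt_of_lt (by nlinarith [pi_pos]) (by nlinarith [pi_pos])
  have hΓ : 0 < Gamma (4 - 2 * s) := Gamma_pos_of_pos (by linarith)
  exact one_div_neg.2 (mul_neg_of_pos_of_neg (by positivity) hcos)

lemma sum_range_secondDiff (f : ℝ → ℝ) (m : ℕ) :
    ∑ i ∈ Finset.range m, secondDiff f (i + 2) = (f (m + 2) - f (m + 1)) - (f 2 - f 1) := by
  convert Finset.sum_range_sub (fun i : ℕ ↦ f (i + 2) - f (i + 1)) m using 2 with i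
  · simp only [secondDiff]; push_cast; ring_nf
  · norm_num

section tFn

variable {s : ℝ}

lemma tFn_zero (hs : s < 3 / 2) : tFn s 0 = 2 * 2 ^ (3 - 2 * s) - 8 := by
  norm_num [tFn, zero_rpow (by linarith : 3 - 2 * s ≠ 0)]
  ring

lemma tFn_one (hs : s < 3 / 2) : tFn s 1 = 7 - 4 * 2 ^ (3 - 2 * s) + 3 ^ (3 - 2 * s) := by
  norm_num [tFn, zero_rpow (by linarith : 3 - 2 * s ≠ 0)]

lemma tFn_eq_secondDiff {p : ℕ} (hp : 2 ≤ p) :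
    tFn s p = secondDiff (secondDiff (· ^ (3 - 2 * s))) p := by
  have h2 : (2 : ℝ) ≤ p := by exact_mod_cast hp
  rw [tFn, abs_of_nonneg (by linarith), abs_of_nonneg (by linarith)]
  simp only [secondDiff]
  ring_nf

lemma tFn_zero_neg (hs : s ∈ Ioo (1 / 2) (3 / 2)) : tFn s 0 < 0 := by
  have h := rpow_lt_rpow_of_exponent_lt one_lt_two (by linarith [hs.1] : 3 - 2 * s < 2)
  rw [tFn_zero hs.2]
  norm_num at h
  linarith

variable (hs : s ∈ Ioo 1 (3 / 2))
include hs

lemma tFn_one_pos : 0 < tFn s 1 := by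
  have h2 := rpow_lt_rpow_of_exponent_lt one_lt_two (by linarith [hs.1] : 3 - 2 * s < 1)
  have h3 := one_lt_rpow (by norm_num : (1 : ℝ) < 3) (by linarith [hs.2] : 0 < 3 - 2 * s)
  rw [tFn_one hs.2]
  norm_num at h2
  linarith

lemma tFn_neg {p : ℕ} (hp : 2 ≤ p) : tFn s p < 0 := by
  have h2 : (2 : ℝ) ≤ p := by exact_mod_cast hp
  rw [tFn_eq_secondDiff hp]
  exact (strictConcaveOn_secondDiff_rpow (by linarith [hs.2]) (by linarith [hs.1])).secondDiff_neg
    (by rw [mem_Ici]; linarith) (by rw [mem_Ici]; linarith)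

lemma tFn_zero_add_two_mul_tFn_one_pos : 0 < tFn s 0 + 2 * tFn s 1 := by
  rw [tFn_zero hs.2, tFn_one hs.2]
  linarith [three_mul_two_rpow_lt_three_add_three_rpow (by linarith [hs.1] : 3 - 2 * s < 1)]

lemma sum_range_abs_tFn_succ_lt (m : ℕ) : ∑ i ∈ Finset.range m, |tFn s (i + 1)| < -tFn s 0 := by
  have ha₀ : 0 < 3 - 2 * s := by linarith [hs.2]
  have ha₁ : 3 - 2 * s < 1 := by linarith [hs.1]
  set φ := secondDiff (· ^ (3 - 2 * s))
  cases m with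
  | zero => simpa using tFn_zero_neg ⟨by linarith [hs.1], hs.2⟩
  | succ m =>
    have hsum : ∑ i ∈ Finset.range (m + 1), |tFn s (i + 1)|
        = tFn s 1 + (φ 2 - φ 1) - (φ (m + 2) - φ (m + 1)) := by
      have htail : ∑ k ∈ Finset.range m, |tFn s (k + 1 + 1)|
          = -∑ k ∈ Finset.range m, secondDiff φ (k + 2) := by
        rw [← Finset.sum_neg_distrib]
        refine Finset.sum_congr rfl fun k _ ↦ ?_
        rw [abs_of_neg (tFn_neg hs (by omega)), tFn_eq_secondDiff (by omega)]
        congr 2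
        push_cast
        ring
      rw [Finset.sum_range_succ', htail, sum_range_secondDiff, zero_add,
        abs_of_pos (tFn_one_pos hs)]
      ring
    have hmono : φ (m + 1) < φ (m + 2) :=
      strictMonoOn_secondDiff_rpow ha₀ ha₁ (by norm_num) (by norm_num; linarith) (by linarith)
    have hφ1 : φ 1 = 2 ^ (3 - 2 * s) - 2 := by
      norm_num [φ, secondDiff, zero_rpow ha₀.ne']
    have hφ2 : φ 2 = 3 ^ (3 - 2 * s) - 2 * 2 ^ (3 - 2 * s) + 1 := by
      norm_num [φ, secondDiff]
    rw [hsum, tFn_zero hs.2, tFn_one hs.2, hφ1, hφ2]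
    linarith [three_rpow_le_two_mul_two_rpow_sub_one ha₀.le ha₁.le,
      rpow_pos_of_pos two_pos (3 - 2 * s)]

end tFn

section FinRow

open Finset

variable {M : Type*} [AddCommMonoid M] {n : ℕ}

lemma sum_ne_natAbs_sub_of_val_eq_zero (g : ℕ → M) (k : Fin n) (hk : (k : ℕ) = 0) :
    ∑ j ∈ univ.filter (fun j => j ≠ k), g (((k : ℕ) : ℤ) - ((j : ℕ) : ℤ)).natAbs
      = ∑ i ∈ range (n - 1), g (i + 1) := by
  cases n with
  | zero => exact k.elim0
  | succ n =>
    obtain rfl : k = 0 := Fin.ext hk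
    rw [sum_filter, Fin.sum_univ_succ, ← Fin.sum_univ_eq_sum_range]
    simp only [Fin.succ_ne_zero, ne_eq, not_true, if_false, not_false_eq_true, if_true, zero_add]
    refine sum_congr rfl fun i _ ↦ congrArg g ?_
    simp only [Fin.val_succ, Fin.val_zero]
    omega

lemma sum_ne_natAbs_sub_rev (g : ℕ → M) (k : Fin n) :
    ∑ j ∈ univ.filter (fun j => j ≠ k.rev), g (((k.rev : ℕ) : ℤ) - ((j : ℕ) : ℤ)).natAbs
      = ∑ j ∈ univ.filter (fun j => j ≠ k), g (((k : ℕ) : ℤ) - ((j : ℕ) : ℤ)).natAbs := by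
  refine sum_equiv Fin.revPerm (by simp [Fin.rev_eq_iff]) fun j _ ↦ ?_
  simp only [Fin.revPerm_apply, Fin.val_rev]
  congr 1
  omega

lemma sum_ne_natAbs_sub_of_val_eq_zero_or_last (g : ℕ → M) (k : Fin n)
    (hk : (k : ℕ) = 0 ∨ (k : ℕ) = n - 1) :
    ∑ j ∈ univ.filter (fun j => j ≠ k), g (((k : ℕ) : ℤ) - ((j : ℕ) : ℤ)).natAbs
      = ∑ i ∈ range (n - 1), g (i + 1) := by
  rcases hk with hk | hk
  · exact sum_ne_natAbs_sub_of_val_eq_zero g k hk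
  · rw [← k.rev_rev, sum_ne_natAbs_sub_rev g]
    exact sum_ne_natAbs_sub_of_val_eq_zero g k.rev (by rw [Fin.val_rev]; omega)

lemma two_mul_le_sum_ne_natAbs_sub (g : ℕ → ℝ) (hg : ∀ d, 0 ≤ g d) (k : Fin n)
    (hk₁ : 1 ≤ (k : ℕ)) (hk₂ : (k : ℕ) + 2 ≤ n) :
    2 * g 1 ≤ ∑ j ∈ univ.filter (fun j => j ≠ k), g (((k : ℕ) : ℤ) - ((j : ℕ) : ℤ)).natAbs := by
  let below : Fin n := ⟨k - 1, by omega⟩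
  let above : Fin n := ⟨k + 1, by omega⟩
  have hne : below ≠ above := by simp [below, above, Fin.ext_iff]
  have hsub : {below, above} ⊆ univ.filter (fun j => j ≠ k) := by
    simp only [Finset.insert_subset_iff, Finset.singleton_subset_iff, mem_filter, Finset.mem_univ,
      true_and, ne_eq, Fin.ext_iff, below, above]
    omega
  calc 2 * g 1 = ∑ j ∈ {below, above}, g (((k : ℕ) : ℤ) - ((j : ℕ) : ℤ)).natAbs := by
        rw [sum_pair hne, two_mul]
        congr 2 <;> simp only [below, above] <;> omega
    _ ≤ _ := sum_le_sum_of_subset_of_nonneg hsub fun _ _ _ ↦ hg _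

end FinRow

theorem stmt16_general (s : ℝ) (hs : s ∈ Set.Ioo (1 : ℝ) (3 / 2))
    (h : ℝ) (hh : 0 < h) (N : ℕ)
    (S : Matrix (Fin (N - 1)) (Fin (N - 1)) ℝ)
    (hS : ∀ k j, S k j =
      Acoef s * h ^ (1 - 2 * s) * tFn s (((k : ℕ) : ℤ) - ((j : ℕ) : ℤ)).natAbs) :
    (∀ k, 0 < S k k) ∧
    (∀ k j : Fin (N - 1), (((k : ℕ) : ℤ) - ((j : ℕ) : ℤ)).natAbs = 1 → S k j < 0) ∧
    (∀ k j : Fin (N - 1), 2 ≤ (((k : ℕ) : ℤ) - ((j : ℕ) : ℤ)).natAbs → 0 < S k j) ∧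
    (∀ k : Fin (N - 1), (k : ℕ) = 0 ∨ (k : ℕ) = N - 2 →
      ∑ j ∈ Finset.univ.filter (fun j => j ≠ k), |S k j| < S k k) ∧
    (4 ≤ N → ∀ k : Fin (N - 1), 1 ≤ (k : ℕ) → (k : ℕ) ≤ N - 3 →
      S k k < ∑ j ∈ Finset.univ.filter (fun j => j ≠ k), |S k j|) := by
  set C := Acoef s * h ^ (1 - 2 * s)
  have hC : C < 0 :=
    mul_neg_of_neg_of_pos (Acoef_neg ⟨by linarith [hs.1], hs.2⟩) (rpow_pos_of_pos hh _)
  have hdiag : ∀ k, S k k = -C * -tFn s 0 := fun k ↦ by simp [hS]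
  have habs : ∀ k j, |S k j| = -C * |tFn s (((k : ℕ) : ℤ) - ((j : ℕ) : ℤ)).natAbs| := fun k j ↦ by
    rw [hS, abs_mul, abs_of_neg hC]
  refine ⟨fun k ↦ ?_, fun k j hkj ↦ ?_, fun k j hkj ↦ ?_, fun k hk ↦ ?_, fun _ k hk₁ hk₂ ↦ ?_⟩
  · rw [hdiag]
    exact mul_pos (neg_pos.2 hC) (neg_pos.2 (tFn_zero_neg ⟨by linarith [hs.1], hs.2⟩))
  · rw [hS, hkj]
    exact mul_neg_of_neg_of_pos hC (tFn_one_pos hs)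
  · rw [hS]
    exact mul_pos_of_neg_of_neg hC (tFn_neg hs hkj)
  · rw [Finset.sum_congr rfl fun j _ ↦ habs k j, ← Finset.mul_sum,
      sum_ne_natAbs_sub_of_val_eq_zero_or_last (fun d ↦ |tFn s d|) k (by omega), hdiag]
    exact mul_lt_mul_of_pos_left (sum_range_abs_tFn_succ_lt hs _) (neg_pos.2 hC)
  · rw [Finset.sum_congr rfl fun j _ ↦ habs k j, ← Finset.mul_sum, hdiag]
    refine mul_lt_mul_of_pos_left ?_ (neg_pos.2 hC)
    calc -tFn s 0 < 2 * |tFn s 1| := by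
          rw [abs_of_pos (tFn_one_pos hs)]
          linarith [tFn_zero_add_two_mul_tFn_one_pos hs]
      _ ≤ _ := two_mul_le_sum_ne_natAbs_sub _ (fun _ ↦ abs_nonneg _) k hk₁ (by omega)

theorem stmt16 (s : ℝ) (hs : s ∈ Set.Ioo (1 : ℝ) (3 / 2))
    (h : ℝ) (hh : 0 < h) (N : ℕ) (hN : 2 ≤ N)
    (S : Matrix (Fin (N - 1)) (Fin (N - 1)) ℝ)
    (hS : ∀ k j, S k j =
      Acoef s * h ^ (1 - 2 * s) * tFn s (((k : ℕ) : ℤ) - ((j : ℕ) : ℤ)).natAbs) :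
    (∀ k, 0 < S k k) ∧
    (∀ k j : Fin (N - 1), (((k : ℕ) : ℤ) - ((j : ℕ) : ℤ)).natAbs = 1 → S k j < 0) ∧
    (∀ k j : Fin (N - 1), 2 ≤ (((k : ℕ) : ℤ) - ((j : ℕ) : ℤ)).natAbs → 0 < S k j) ∧
    (∀ k : Fin (N - 1), (k : ℕ) = 0 ∨ (k : ℕ) = N - 2 →
      ∑ j ∈ Finset.univ.filter (fun j => j ≠ k), |S k j| < S k k) ∧
    (4 ≤ N → ∀ k : Fin (N - 1), 1 ≤ (k : ℕ) → (k : ℕ) ≤ N - 3 →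
      S k k < ∑ j ∈ Finset.univ.filter (fun j => j ≠ k), |S k j|) :=
  stmt16_general s hs h hh N S hS
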